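/- Let C be a multiset of real numbers with |C| = n ≥ 3 and sorted elements l₀ ≤ l₁ ≤ … ≤ l_{n−1}. If C' = (C − {l₀}) + {v} is obtained by replacing one occurrence of the smallest element by a value v ≥ l_{n−1}, then preSum(C') − preSum(C) = (l_{n−1} − l₁) + (l₂ − l₁) + (l_{n−1} − l_{n−2}); in particular this difference does not depend on v. -/

import Mathlib

/-- The `i`-th smallest element of a multiset of reals (0-indexed). -/
noncomputable def nthSmallest (M : Multiset ℝ) (i : ℕ) : ℝ :=
  (M.sort (· ≤ ·)).getD i 0

/-- The preprocessed sum of a multiset `M` with sorted elements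
`l₀ ≤ l₁ ≤ … ≤ l_{n−1}`: the sum after replacing one occurrence of the smallest
value by the second smallest and one occurrence of the largest value by the
second largest, i.e. `(Σ M) − l₀ − l_{n−1} + l₁ + l_{n−2}`. -/
noncomputable def preSum (M : Multiset ℝ) : ℝ :=
  M.sum - nthSmallest M 0 - nthSmallest M (M.card - 1)
    + nthSmallest M 1 + nthSmallest M (M.card - 2)

/-- The preprocessed centroid of a multiset `M`. -/
noncomputable def preMean (M : Multiset ℝ) : ℝ := preSum M / M.card

/-! Since `v` dominates `C`, the sorted list of `C.erase l₀ + {v}` is the tail of the sorted list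
of `C` followed by `v`. Hence its order statistics are those of `C` shifted down by one, with `v`
on top, and its sum is `Σ C − l₀ + v`; in the difference of the preprocessed sums `v` cancels. -/

theorem Multiset.sort_coe_of_pairwise {α : Type*} (r : α → α → Prop) [DecidableRel r]
    [IsTrans α r] [Std.Antisymm r] [Std.Total r] {l : List α} (hl : l.Pairwise r) :
    Multiset.sort (l : Multiset α) r = l :=
  List.mergeSort_eq_self _ hl

theorem nthSmallest_mem {M : Multiset ℝ} {i : ℕ} (hi : i < M.card) : nthSmallest M i ∈ M := by
  rw [nthSmallest, List.getD_eq_getElem _ _ (by simpa using hi), ← Multiset.mem_sort (· ≤ ·)]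
  exact List.getElem_mem _

theorem le_nthSmallest_card_sub_one {M : Multiset ℝ} {x : ℝ} (hx : x ∈ M) :
    x ≤ nthSmallest M (M.card - 1) := by
  have hx' : x ∈ M.sort (· ≤ ·) := (Multiset.mem_sort _).2 hx
  have hne : M.sort (· ≤ ·) ≠ [] := List.ne_nil_of_mem hx'
  rw [nthSmallest, ← Multiset.length_sort (· ≤ ·),
    List.getD_eq_getElem _ _ (by simpa using List.length_pos_of_ne_nil hne),
    ← List.getLast_eq_getElem hne]
  exact (Multiset.pairwise_sort M _).rel_getLast hx'

theorem erase_nthSmallest_zero (M : Multiset ℝ) :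
    M.erase (nthSmallest M 0) = ((M.sort (· ≤ ·)).tail : Multiset ℝ) := by
  obtain ⟨L, hL⟩ : ∃ L, M.sort (· ≤ ·) = L := ⟨_, rfl⟩
  have hM : M = L := by rw [← hL, Multiset.sort_eq]
  rw [nthSmallest, hL, hM]
  cases L with
  | nil => rfl
  | cons a T => exact Multiset.erase_cons_head a T

theorem sort_erase_nthSmallest_zero_add {M : Multiset ℝ} {v : ℝ} (hv : ∀ x ∈ M, x ≤ v) :
    (M.erase (nthSmallest M 0) + {v}).sort (· ≤ ·) = (M.sort (· ≤ ·)).tail ++ [v] := by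
  rw [erase_nthSmallest_zero, ← Multiset.coe_singleton, Multiset.coe_add]
  refine Multiset.sort_coe_of_pairwise _
    (List.pairwise_append.2 ⟨?_, List.pairwise_singleton _ v, ?_⟩)
  · exact (Multiset.pairwise_sort M _).sublist (List.tail_sublist _)
  · intro x hx y hy
    rw [List.mem_singleton.1 hy]
    exact hv x ((Multiset.mem_sort _).1 (List.mem_of_mem_tail hx))

section ReplaceSmallest

variable {M : Multiset ℝ} {v : ℝ} (hv : ∀ x ∈ M, x ≤ v)
include hv

theorem nthSmallest_erase_zero_add_of_lt {i : ℕ} (hi : i + 1 < M.card) :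
    nthSmallest (M.erase (nthSmallest M 0) + {v}) i = nthSmallest M (i + 1) := by
  have hlen : i + 1 < (M.sort (· ≤ ·)).length := by simpa using hi
  rw [nthSmallest, sort_erase_nthSmallest_zero_add hv,
    List.getD_append _ _ _ _ (by simp; omega), List.getD_eq_getElem _ _ (by simp; omega),
    List.getElem_tail, nthSmallest, List.getD_eq_getElem _ _ hlen]

theorem nthSmallest_erase_zero_add_card_sub_one :
    nthSmallest (M.erase (nthSmallest M 0) + {v}) (M.card - 1) = v := by
  rw [nthSmallest, sort_erase_nthSmallest_zero_add hv,
    List.getD_append_right _ _ _ _ (by simp)]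
  simp

end ReplaceSmallest

/-- Replacing one occurrence of the smallest element of `C` by a value
`v ≥ l_{n−1}` changes the preprocessed sum by
`(l_{n−1} − l₁) + (l₂ − l₁) + (l_{n−1} − l_{n−2})`, independently of `v`. -/
theorem preSum_replace_smallest (C : Multiset ℝ) (n : ℕ) (hn : 3 ≤ n)
    (hcard : C.card = n) (v : ℝ) (hv : nthSmallest C (n - 1) ≤ v) :
    preSum (C.erase (nthSmallest C 0) + {v}) - preSum C =
      (nthSmallest C (n - 1) - nthSmallest C 1)
        + (nthSmallest C 2 - nthSmallest C 1)
        + (nthSmallest C (n - 1) - nthSmallest C (n - 2)) := by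
  subst hcard
  have hle : ∀ x ∈ C, x ≤ v := fun x hx => (le_nthSmallest_card_sub_one hx).trans hv
  have hmem : nthSmallest C 0 ∈ C := nthSmallest_mem (by omega)
  have hcard' : (C.erase (nthSmallest C 0) + {v}).card = C.card := by
    rw [Multiset.card_add, Multiset.card_erase_of_mem hmem, Multiset.card_singleton,
      Nat.pred_eq_sub_one]
    omega
  have hsum : (C.erase (nthSmallest C 0) + {v}).sum = C.sum - nthSmallest C 0 + v := by
    rw [Multiset.sum_add, Multiset.sum_singleton, ← Multiset.sum_erase hmem]
    ring
  have hshift := fun i (hi : i + 1 < C.card) => nthSmallest_erase_zero_add_of_lt hle hi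
  have hpred : C.card - 2 + 1 = C.card - 1 := by omega
  rw [preSum, preSum, hcard', hsum, hshift 0 (by omega), hshift 1 (by omega),
    hshift (C.card - 2) (by omega), hpred,
    nthSmallest_erase_zero_add_card_sub_one hle]
  ring
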